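/- arXiv:math/0406577 — 5 statements merged into one kernel-verified Lean document; each statement's English description precedes it below -/
import Mathlib

section
/- Let (A; θ_0,…,θ_d; A*; θ*_0,…,θ*_d) be a Leonard system on V, with primitive idempotents E_i of A and E*_i of A*. Define four flags on V by their i-th components (0 ≤ i ≤ d): [0]_i = E_0V + ⋯ + E_iV; [d]_i = E_dV + E_{d−1}V + ⋯ + E_{d−i}V; [0*]_i = E*_0V + ⋯ + E*_iV; [d*]_i = E*_dV + E*_{d−1}V + ⋯ + E*_{d−i}V. Then these four flags are mutually opposite: for any two distinct flags F, G among them, F_i ∩ G_j = 0 whenever 0 ≤ i,j ≤ d and i + j < d. -/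
open Polynomial Finset

/-- The primitive idempotent of `A` associated with the eigenvalue `θ i`:
`E_i = ∏_{j ≠ i} (A - θ_j I) / (θ_i - θ_j)`. -/
noncomputable def primIdem {K V : Type*} [Field K] [AddCommGroup V] [Module K V]
    {d : ℕ} (A : Module.End K V) (θ : Fin (d + 1) → K) (i : Fin (d + 1)) :
    Module.End K V :=
  aeval A (∏ j ∈ Finset.univ.erase i, (C ((θ i - θ j)⁻¹) * (X - C (θ j))))

section Aux

variable {K V : Type*} [Field K] [AddCommGroup V] [Module K V] {d : ℕ}

lemma primIdem_eq (B : Module.End K V) (η : Fin (d + 1) → K) (i : Fin (d + 1)) :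
    primIdem B η i = aeval B (Lagrange.basis Finset.univ η i) := rfl

variable {B : Module.End K V} {η : Fin (d + 1) → K}

lemma aeval_eq_zero_of_eval (hη : Function.Injective η)
    (hmin : minpoly K B = ∏ i, (X - C (η i)))
    {f : K[X]} (hf : ∀ k, f.eval (η k) = 0) : aeval B f = 0 := by
  have hdvd : (∏ i : Fin (d + 1), (X - C (η i))) ∣ f := by
    apply Finset.prod_dvd_of_coprime
    · exact (Polynomial.pairwise_coprime_X_sub_C hη).set_pairwise _
    · exact fun i _ => Polynomial.dvd_iff_isRoot.mpr (hf i)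
  obtain ⟨g, hg⟩ := hdvd
  rw [hg, map_mul, ← hmin, minpoly.aeval, zero_mul]

lemma primIdem_sum (hη : Function.Injective η) : ∑ i, primIdem B η i = 1 := by
  simp_rw [primIdem_eq]
  rw [← map_sum, Lagrange.sum_basis hη.injOn Finset.univ_nonempty, map_one]

lemma primIdem_orth (hη : Function.Injective η)
    (hmin : minpoly K B = ∏ i, (X - C (η i))) {i j : Fin (d + 1)} (hij : i ≠ j) :
    primIdem B η i * primIdem B η j = 0 := by
  rw [primIdem_eq, primIdem_eq, ← map_mul]
  apply aeval_eq_zero_of_eval hη hmin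
  intro k
  rw [eval_mul]
  by_cases hk : i = k
  · have hjk : j ≠ k := by rw [← hk]; exact hij.symm
    rw [Lagrange.eval_basis_of_ne hjk (Finset.mem_univ k), mul_zero]
  · rw [Lagrange.eval_basis_of_ne hk (Finset.mem_univ k), zero_mul]

lemma primIdem_idem (hη : Function.Injective η)
    (hmin : minpoly K B = ∏ i, (X - C (η i))) (i : Fin (d + 1)) :
    primIdem B η i * primIdem B η i = primIdem B η i := by
  have h : aeval B (Lagrange.basis Finset.univ η i * Lagrange.basis Finset.univ η i
      - Lagrange.basis Finset.univ η i) = 0 := by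
    apply aeval_eq_zero_of_eval hη hmin
    intro k
    rw [eval_sub, eval_mul]
    by_cases hk : i = k
    · subst hk; rw [Lagrange.eval_basis_self hη.injOn (Finset.mem_univ i)]; ring
    · rw [Lagrange.eval_basis_of_ne hk (Finset.mem_univ k)]; ring
  rw [map_sub, map_mul, sub_eq_zero] at h
  simp only [primIdem_eq]; exact h

lemma primIdem_eigen (hη : Function.Injective η)
    (hmin : minpoly K B = ∏ i, (X - C (η i))) (i : Fin (d + 1)) (v : V) :
    B (primIdem B η i v) = η i • primIdem B η i v := by
  have h : aeval B ((X - C (η i)) * Lagrange.basis Finset.univ η i) = 0 := by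
    apply aeval_eq_zero_of_eval hη hmin
    intro k
    rw [eval_mul]
    by_cases hk : i = k
    · subst hk; simp
    · rw [Lagrange.eval_basis_of_ne hk (Finset.mem_univ k), mul_zero]
  rw [map_mul, map_sub, aeval_X, aeval_C] at h
  have h2 := LinearMap.ext_iff.mp h v
  simpa [Module.End.mul_apply, LinearMap.sub_apply, Module.algebraMap_end_apply,
    sub_eq_zero, primIdem_eq] using h2

lemma aeval_primIdem_apply (hη : Function.Injective η)
    (hmin : minpoly K B = ∏ i, (X - C (η i))) (p : K[X]) (i : Fin (d + 1)) (v : V) :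
    aeval B p (primIdem B η i v) = p.eval (η i) • primIdem B η i v := by
  by_cases h : primIdem B η i v = 0
  · simp [h]
  · exact Module.End.aeval_apply_of_hasEigenvector
      ⟨Module.End.mem_eigenspace_iff.mpr (primIdem_eigen hη hmin i v), h⟩

lemma primIdem_ne_zero (hη : Function.Injective η)
    (hmin : minpoly K B = ∏ i, (X - C (η i))) (i : Fin (d + 1)) :
    primIdem B η i ≠ 0 := by
  intro h
  have hb0 : Lagrange.basis Finset.univ η i ≠ 0 :=
    Lagrange.basis_ne_zero hη.injOn (Finset.mem_univ i)
  have hdvd : minpoly K B ∣ Lagrange.basis Finset.univ η i := by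
    apply minpoly.dvd
    rw [← primIdem_eq, h]
  have hle := Polynomial.natDegree_le_of_dvd hdvd hb0
  rw [hmin, ← Lagrange.nodal_eq, Lagrange.natDegree_nodal,
    Lagrange.natDegree_basis hη.injOn (Finset.mem_univ i)] at hle
  simp [Finset.card_univ] at hle

lemma rank_le_one_of_orth [FiniteDimensional K V] (hdim : Module.finrank K V = d + 1)
    (E : Fin (d + 1) → Module.End K V)
    (hsum : ∑ i, E i = 1)
    (horth : ∀ i j : Fin (d + 1), i ≠ j → E i * E j = 0)
    (hidem : ∀ i, E i * E i = E i)
    (hnz : ∀ i, E i ≠ 0) (i : Fin (d + 1)) :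
    Module.finrank K (LinearMap.range (E i)) ≤ 1 := by
  set W : Fin (d + 1) → Submodule K V := fun i => LinearMap.range (E i) with hW
  have happ : ∀ i x, x ∈ W i → E i x = x := by
    rintro i x ⟨w, rfl⟩
    rw [← Module.End.mul_apply, hidem]
  have hker : ∀ i j, i ≠ j → W j ≤ LinearMap.ker (E i) := by
    rintro i j hij x ⟨w, rfl⟩
    rw [LinearMap.mem_ker, ← Module.End.mul_apply, horth i j hij, LinearMap.zero_apply]
  have hindep : iSupIndep W := by
    intro i
    rw [disjoint_iff_inf_le]
    rintro x ⟨hx1, hx2⟩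
    have h1 : E i x = x := happ i x hx1
    have h2 : E i x = 0 := by
      have hle : (⨆ j, ⨆ _ : j ≠ i, W j) ≤ LinearMap.ker (E i) :=
        iSup_le fun j => iSup_le fun hj => hker i j (Ne.symm hj)
      exact hle hx2
    rw [h1] at h2
    simpa [h2] using Submodule.zero_mem ⊥
  have htop : ⨆ j, W j = ⊤ := by
    rw [eq_top_iff]
    intro x _
    have hx : x = ∑ j, E j x := by
      have h1 : (∑ j, E j) x = x := by rw [hsum]; rfl
      rw [LinearMap.sum_apply] at h1
      exact h1.symm
    rw [hx]
    exact Submodule.sum_mem _ fun j _ => Submodule.mem_iSup_of_mem j ⟨x, rfl⟩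
  have hint := DirectSum.isInternal_submodule_of_iSupIndep_of_iSup_eq_top hindep htop
  have hfr : ∑ j, Module.finrank K (W j) = d + 1 := by
    classical
    have he := (LinearEquiv.ofBijective (DirectSum.coeLinearMap W) hint).finrank_eq
    rw [Module.finrank_directSum, hdim] at he
    exact he
  have hge : ∀ j, 1 ≤ Module.finrank K (W j) := by
    intro j
    by_contra h
    have h0 : Module.finrank K (W j) = 0 := by omega
    rw [Submodule.finrank_eq_zero] at h0
    exact hnz j (LinearMap.range_eq_bot.mp h0)
  have hsplit : Module.finrank K (W i) + ∑ j ∈ Finset.univ.erase i, Module.finrank K (W j)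
      = d + 1 := by
    rw [Finset.add_sum_erase Finset.univ (fun j => Module.finrank K (W j)) (Finset.mem_univ i)]
    exact hfr
  have hcard : d ≤ ∑ j ∈ Finset.univ.erase i, Module.finrank K (W j) := by
    calc d = (Finset.univ.erase i).card := by
            rw [Finset.card_erase_of_mem (Finset.mem_univ i), Finset.card_univ,
              Fintype.card_fin]; omega
      _ = ∑ _j ∈ Finset.univ.erase i, 1 := by rw [Finset.card_eq_sum_ones]
      _ ≤ ∑ j ∈ Finset.univ.erase i, Module.finrank K (W j) :=
            Finset.sum_le_sum fun j _ => hge j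
  show Module.finrank K (W i) ≤ 1
  omega

lemma span_helper {K V : Type*} [Field K] [AddCommGroup V] [Module K V]
    [FiniteDimensional K V] (T : Module.End K V)
    (hT : Module.finrank K (LinearMap.range T) ≤ 1)
    {w : V} (hw0 : w ≠ 0) (hw : w ∈ LinearMap.range T) (u : V) :
    ∃ c : K, T u = c • w := by
  obtain ⟨v, hv⟩ := finrank_le_one_iff.mp hT
  obtain ⟨c₀, hc₀⟩ := hv ⟨w, hw⟩
  obtain ⟨c₁, hc₁⟩ := hv ⟨T u, LinearMap.mem_range_self T u⟩
  have hc₀' : c₀ • (v : V) = w := by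
    have := congrArg (Subtype.val) hc₀
    simpa using this
  have hc₁' : c₁ • (v : V) = T u := by
    have := congrArg (Subtype.val) hc₁
    simpa using this
  have hc₀0 : c₀ ≠ 0 := by
    rintro rfl
    rw [zero_smul] at hc₀'
    exact hw0 hc₀'.symm
  refine ⟨c₁ / c₀, ?_⟩
  rw [← hc₀', ← hc₁', smul_smul, div_mul_cancel₀ _ hc₀0]


lemma key_nat (d : ℕ) (M : Module.End K V) (Q : ℕ → Module.End K V)
    (hsum : ∑ k ∈ Finset.range (d + 1), Q k = 1)
    (horth : ∀ i j : ℕ, i ≠ j → Q i * Q j = 0)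
    (hidem : ∀ i : ℕ, Q i * Q i = Q i)
    (hspan : ∀ i : ℕ, ∀ w : V, w ≠ 0 → w ∈ LinearMap.range (Q i) →
      ∀ u : V, ∃ c : K, Q i u = c • w)
    (htri0 : ∀ i j : ℕ, j + 1 < i → Q i * M * Q j = 0)
    (htri1 : ∀ j : ℕ, j + 1 ≤ d → Q (j + 1) * M * Q j ≠ 0)
    (m : ℕ) (x : V) (b : ℕ) (hb : b + m ≤ d)
    (hwin : ∀ k : ℕ, b < k → Q k x = 0)
    (p : K[X]) (hmonic : p.Monic) (hdeg : p.natDegree = m)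
    (hkill : aeval M p x = 0) : x = 0 := by
  classical
  -- expansion helper
  have hexpand : ∀ (a t k : ℕ), Q a * M ^ (t + 1) * Q k
      = ∑ c ∈ Finset.range (d + 1), (Q a * M * Q c) * (Q c * M ^ t * Q k) := by
    intro a t k
    calc Q a * M ^ (t + 1) * Q k
        = (Q a * M) * (∑ c ∈ Finset.range (d + 1), Q c) * (M ^ t * Q k) := by
          rw [hsum, mul_one, pow_succ']; noncomm_ring
      _ = ∑ c ∈ Finset.range (d + 1), (Q a * M * Q c) * (Q c * M ^ t * Q k) := by
          rw [Finset.mul_sum, Finset.sum_mul]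
          refine Finset.sum_congr rfl fun c _ => ?_
          conv_lhs => rw [← hidem c]
          noncomm_ring
  -- vanishing below the superdiagonal band
  have hvan : ∀ t a k : ℕ, k + t < a → Q a * M ^ t * Q k = 0 := by
    intro t
    induction t with
    | zero =>
      intro a k h
      rw [pow_zero, mul_one]
      exact horth a k (by omega)
    | succ t ih =>
      intro a k h
      rw [hexpand a t k]
      refine Finset.sum_eq_zero fun c _ => ?_
      by_cases hc : c + 1 < a
      · rw [htri0 a c hc, zero_mul]
      · rw [ih c k (by omega), mul_zero]
  -- top term factorization
  have htop : ∀ t k : ℕ, k + t + 1 ≤ d → Q (k + t + 1) * M ^ (t + 1) * Q k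
      = (Q (k + t + 1) * M * Q (k + t)) * (Q (k + t) * M ^ t * Q k) := by
    intro t k hk
    rw [hexpand (k + t + 1) t k]
    refine Finset.sum_eq_single (k + t) (fun c _ hne => ?_)
      (fun h => absurd (Finset.mem_range.mpr (by omega)) h)
    by_cases h1 : c < k + t
    · rw [htri0 _ _ (by omega), zero_mul]
    · rw [hvan t c k (by omega), mul_zero]
  -- the chain of raising maps is injective on the 1-dim eigenspaces
  have hchain : ∀ t r : ℕ, r + t ≤ d → ∀ v : V, Q r v = v → v ≠ 0 →
      Q (r + t) ((M ^ t) v) ≠ 0 := by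
    intro t
    induction t with
    | zero =>
      intro r _ v hv hv0
      simpa [hv] using hv0
    | succ t ih =>
      intro r hr v hv hv0
      set w := Q (r + t) ((M ^ t) v) with hw
      have hw0 : w ≠ 0 := ih r (by omega) v hv hv0
      have hwQ : Q (r + t) w = w := by rw [hw, ← Module.End.mul_apply, hidem]
      have hstep : Q (r + t + 1) ((M ^ (t + 1)) v) = Q (r + t + 1) (M w) := by
        have h1 : Q (r + t + 1) ((M ^ (t + 1)) v) = (Q (r + t + 1) * M ^ (t + 1) * Q r) v := by
          rw [Module.End.mul_apply, Module.End.mul_apply, hv]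
        rw [h1, htop t r (by omega)]
        simp only [Module.End.mul_apply]
        rw [hv, ← Module.End.mul_apply (Q (r + t)) (Q (r + t)), hidem]
      have hidx : r + (t + 1) = r + t + 1 := rfl
      rw [hidx, hstep]
      intro hcon
      apply htri1 (r + t) (by omega)
      ext u
      obtain ⟨c, hc⟩ := hspan (r + t) w hw0 ⟨w, hwQ⟩ u
      simp only [Module.End.mul_apply, LinearMap.zero_apply]
      rw [hc, map_smul, map_smul, hcon, smul_zero]
  -- main argument
  by_contra hx
  have hxdec : x = ∑ k ∈ Finset.range (d + 1), Q k x := by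
    have h1 : (∑ k ∈ Finset.range (d + 1), Q k) x = x := by rw [hsum]; rfl
    rw [LinearMap.sum_apply] at h1
    exact h1.symm
  set S : Finset ℕ := (Finset.range (d + 1)).filter fun k => Q k x ≠ 0 with hSdef
  have hS : S.Nonempty := by
    by_contra h
    rw [Finset.not_nonempty_iff_eq_empty] at h
    apply hx
    rw [hxdec]
    refine Finset.sum_eq_zero fun k hk => ?_
    by_contra hk0
    have : k ∈ S := by rw [hSdef, Finset.mem_filter]; exact ⟨hk, hk0⟩
    rw [h] at this
    exact absurd this (Finset.notMem_empty k)
  set r := S.max' hS with hrdef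
  have hrS : r ∈ S := S.max'_mem hS
  have hrx : Q r x ≠ 0 := (Finset.mem_filter.mp hrS).2
  have hrb : r ≤ b := by
    by_contra h
    exact hrx (hwin r (by omega))
  have hmax : ∀ k ∈ S, k ≤ r := fun k hk => S.le_max' k hk
  -- coefficient expansion of aeval
  have hp' : aeval M p = ∑ t ∈ Finset.range (m + 1), p.coeff t • M ^ t :=
    Polynomial.aeval_eq_sum_range' (n := m + 1) (p := p) (by omega) M
  have hxd : ∀ t : ℕ, Q (r + m) ((M ^ t) x)
      = ∑ k ∈ Finset.range (d + 1), (Q (r + m) * M ^ t * Q k) (Q k x) := by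
    intro t
    conv_lhs => rw [hxdec]
    rw [map_sum, map_sum]
    refine Finset.sum_congr rfl fun k _ => ?_
    simp only [Module.End.mul_apply]
    rw [← Module.End.mul_apply (Q k) (Q k), hidem]
  have key0 : Q (r + m) (aeval M p x) = Q (r + m) ((M ^ m) (Q r x)) := by
    have h1 : Q (r + m) (aeval M p x)
        = ∑ t ∈ Finset.range (m + 1), p.coeff t • Q (r + m) ((M ^ t) x) := by
      rw [hp']
      rw [LinearMap.sum_apply, map_sum]
      refine Finset.sum_congr rfl fun t _ => ?_
      rw [LinearMap.smul_apply, map_smul]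
    rw [h1]
    have h2 : ∀ t ∈ Finset.range (m + 1),
        p.coeff t • Q (r + m) ((M ^ t) x)
        = p.coeff t • ∑ k ∈ Finset.range (d + 1), (Q (r + m) * M ^ t * Q k) (Q k x) :=
      fun t _ => by rw [hxd t]
    rw [Finset.sum_congr rfl h2]
    have hterm0 : ∀ t k : ℕ, t ≤ m → (t ≠ m ∨ k ≠ r) → k ∈ Finset.range (d + 1) →
        (Q (r + m) * M ^ t * Q k) (Q k x) = 0 := by
      intro t k ht hne hkmem
      by_cases hk0 : Q k x = 0
      · rw [hk0, map_zero]
      · have hkS : k ∈ S := by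
          rw [hSdef, Finset.mem_filter]
          exact ⟨hkmem, hk0⟩
        have hkr : k ≤ r := hmax k hkS
        have hlt : k + t < r + m := by rcases hne with h | h <;> omega
        rw [hvan t (r + m) k hlt, LinearMap.zero_apply]
    rw [Finset.sum_eq_single m (fun t htmem htne => ?_)
      (fun h => absurd (Finset.mem_range.mpr (by omega)) h)]
    · have hcm : p.coeff m = 1 := by
        rw [← hdeg]; exact hmonic.coeff_natDegree
      rw [hcm, one_smul]
      rw [Finset.sum_eq_single r (fun k hkmem hkne => hterm0 m k le_rfl (Or.inr hkne) hkmem)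
        (fun h => absurd (Finset.mem_range.mpr (by
          have := Finset.mem_range.mp (Finset.mem_filter.mp hrS).1; omega)) h)]
      simp only [Module.End.mul_apply]
      rw [← Module.End.mul_apply (Q r) (Q r), hidem]
    · rw [Finset.sum_eq_zero (fun k hkmem =>
        hterm0 t k (by exact Nat.lt_succ_iff.mp (Finset.mem_range.mp htmem))
          (Or.inl htne) hkmem), smul_zero]
  have hfin : Q (r + m) ((M ^ m) (Q r x)) ≠ 0 := by
    apply hchain m r (by omega) (Q r x) _ hrx
    rw [← Module.End.mul_apply, hidem]
  apply hfin
  rw [← key0, hkill, map_zero]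


lemma key_fin [FiniteDimensional K V] {d : ℕ}
    (E : Fin (d + 1) → Module.End K V) (M : Module.End K V)
    (hsum : ∑ i, E i = 1)
    (horth : ∀ i j : Fin (d + 1), i ≠ j → E i * E j = 0)
    (hidem : ∀ i, E i * E i = E i)
    (hrank : ∀ i, Module.finrank K (LinearMap.range (E i)) ≤ 1)
    (htri : ∀ i j : Fin (d + 1),
      ((1 : ℤ) < |((i : ℕ) : ℤ) - ((j : ℕ) : ℤ)| → E i * M * E j = 0) ∧
      (|((i : ℕ) : ℤ) - ((j : ℕ) : ℤ)| = 1 → E i * M * E j ≠ 0))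
    (σ : Fin (d + 1) → Fin (d + 1)) (hσb : Function.Bijective σ)
    (hσabs : ∀ i j : Fin (d + 1),
      ((σ i : ℕ) : ℤ) - ((σ j : ℕ) : ℤ) = ((i : ℕ) : ℤ) - ((j : ℕ) : ℤ) ∨
      ((σ i : ℕ) : ℤ) - ((σ j : ℕ) : ℤ) = -(((i : ℕ) : ℤ) - ((j : ℕ) : ℤ)))
    (m : ℕ) (x : V) (b : ℕ) (hb : b + m ≤ d)
    (hwin : ∀ (k : ℕ) (h : k < d + 1), b < k → E (σ ⟨k, h⟩) x = 0)
    (p : K[X]) (hmonic : p.Monic) (hdeg : p.natDegree = m)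
    (hkill : aeval M p x = 0) : x = 0 := by
  classical
  set Q : ℕ → Module.End K V :=
    fun k => if h : k < d + 1 then E (σ ⟨k, h⟩) else 0 with hQdef
  have hQlt : ∀ (k : ℕ) (h : k < d + 1), Q k = E (σ ⟨k, h⟩) := fun k h => dif_pos h
  have hQge : ∀ k : ℕ, d + 1 ≤ k → Q k = 0 := fun k h => dif_neg (by omega)
  refine key_nat d M Q ?_ ?_ ?_ ?_ ?_ ?_ m x b hb ?_ p hmonic hdeg hkill
  · calc ∑ k ∈ Finset.range (d + 1), Q k
        = ∑ i : Fin (d + 1), Q ↑i := (Fin.sum_univ_eq_sum_range (fun k => Q k) (d + 1)).symm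
      _ = ∑ i : Fin (d + 1), E (σ i) := Finset.sum_congr rfl fun i _ => by
            rw [hQlt ↑i i.isLt, Fin.eta]
      _ = ∑ i : Fin (d + 1), E i := hσb.sum_comp E
      _ = 1 := hsum
  · intro a c hac
    by_cases ha : a < d + 1
    · by_cases hc : c < d + 1
      · rw [hQlt a ha, hQlt c hc]
        refine horth _ _ fun heq => hac ?_
        have := hσb.injective heq
        exact congrArg Fin.val this
      · rw [hQge c (by omega), mul_zero]
    · rw [hQge a (by omega), zero_mul]
  · intro a
    by_cases ha : a < d + 1
    · rw [hQlt a ha]; exact hidem _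
    · rw [hQge a (by omega), mul_zero]
  · intro a w hw0 hwmem u
    by_cases ha : a < d + 1
    · rw [hQlt a ha] at hwmem ⊢
      exact span_helper _ (hrank _) hw0 hwmem u
    · rw [hQge a (by omega)] at hwmem
      obtain ⟨y, hy⟩ := hwmem
      exact absurd hy.symm (by simpa using hw0)
  · intro a c hac
    by_cases ha : a < d + 1
    · have hc : c < d + 1 := by omega
      rw [hQlt a ha, hQlt c hc]
      refine (htri _ _).1 ?_
      rcases hσabs ⟨a, ha⟩ ⟨c, hc⟩ with h | h <;>
        · rw [lt_abs]
          have h' := h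
          have hav : ((⟨a, ha⟩ : Fin (d + 1)) : ℕ) = a := rfl
          have hcv : ((⟨c, hc⟩ : Fin (d + 1)) : ℕ) = c := rfl
          rw [hav, hcv] at h'
          omega
    · rw [hQge a (by omega), zero_mul, zero_mul]
  · intro c hc
    rw [hQlt (c + 1) (by omega), hQlt c (by omega)]
    refine (htri _ _).2 ?_
    rcases hσabs ⟨c + 1, by omega⟩ ⟨c, by omega⟩ with h | h <;>
      · rw [abs_eq (by norm_num : (0 : ℤ) ≤ 1)]
        have h' := h
        have hav : ((⟨c + 1, by omega⟩ : Fin (d + 1)) : ℕ) = c + 1 := rfl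
        have hcv : ((⟨c, by omega⟩ : Fin (d + 1)) : ℕ) = c := rfl
        rw [hav, hcv] at h'
        omega
  · intro k hk
    by_cases h : k < d + 1
    · rw [hQlt k h]; exact hwin k h hk
    · rw [hQge k (by omega)]; rfl


end Aux

section Aux2
variable {K V : Type*} [Field K] [AddCommGroup V] [Module K V] {d : ℕ}
variable {B : Module.End K V} {η : Fin (d + 1) → K}

lemma flag_window (hη : Function.Injective η)
    (hmin : minpoly K B = ∏ i, (X - C (η i))) {P : Fin (d + 1) → Prop} {r : Fin (d + 1)}
    (hPr : ∀ k, P k → k ≠ r) {x : V}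
    (hx : x ∈ ⨆ k, ⨆ _ : P k, LinearMap.range (primIdem B η k)) :
    primIdem B η r x = 0 := by
  have hle : (⨆ k, ⨆ _ : P k, LinearMap.range (primIdem B η k))
      ≤ LinearMap.ker (primIdem B η r) := by
    refine iSup_le fun k => iSup_le fun hk => ?_
    rintro _ ⟨w, rfl⟩
    rw [LinearMap.mem_ker, ← Module.End.mul_apply,
      primIdem_orth hη hmin (Ne.symm (hPr k hk))]
    rfl
  exact hle hx

lemma flag_kill (hη : Function.Injective η)
    (hmin : minpoly K B = ∏ i, (X - C (η i))) {P : Fin (d + 1) → Prop}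
    {s : Finset (Fin (d + 1))} (hPs : ∀ k, P k → k ∈ s) {x : V}
    (hx : x ∈ ⨆ k, ⨆ _ : P k, LinearMap.range (primIdem B η k)) :
    aeval B (∏ l ∈ s, (X - C (η l))) x = 0 := by
  have hle : (⨆ k, ⨆ _ : P k, LinearMap.range (primIdem B η k))
      ≤ LinearMap.ker (aeval B (∏ l ∈ s, (X - C (η l)))) := by
    refine iSup_le fun k => iSup_le fun hk => ?_
    rintro _ ⟨w, rfl⟩
    rw [LinearMap.mem_ker, aeval_primIdem_apply hη hmin]
    have h0 : eval (η k) (∏ l ∈ s, (X - C (η l))) = 0 := by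
      rw [eval_prod]
      exact Finset.prod_eq_zero (hPs k hk) (by simp)
    rw [h0, zero_smul]
  exact hle hx

lemma eq_zero_of_primIdem (hη : Function.Injective η) {x : V}
    (h : ∀ r, primIdem B η r x = 0) : x = 0 := by
  have h1 : (∑ r, primIdem B η r) x = x := by rw [primIdem_sum hη]; rfl
  rw [LinearMap.sum_apply] at h1
  rw [← h1]
  exact Finset.sum_eq_zero fun r _ => h r

lemma card_filter_le_val (d c : ℕ) (hc : c ≤ d) :
    ((Finset.univ : Finset (Fin (d + 1))).filter fun l : Fin (d + 1) => (l : ℕ) ≤ c).card = c + 1 := by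
  have heq : ((Finset.univ : Finset (Fin (d + 1))).filter fun l : Fin (d + 1) => (l : ℕ) ≤ c)
      = Finset.Iic ⟨c, by omega⟩ := by
    ext l
    simp [Fin.le_def]
  rw [heq, Fin.card_Iic]

lemma card_filter_ge_val (d c : ℕ) (hc : c ≤ d) :
    ((Finset.univ : Finset (Fin (d + 1))).filter fun l : Fin (d + 1) => d - c ≤ (l : ℕ)).card = c + 1 := by
  have heq : ((Finset.univ : Finset (Fin (d + 1))).filter fun l : Fin (d + 1) => d - c ≤ (l : ℕ))
      = Finset.Ici ⟨d - c, by omega⟩ := by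
    ext l
    simp [Fin.le_def]
  rw [heq, Fin.card_Ici]
  have hv : ((⟨d - c, by omega⟩ : Fin (d + 1)) : ℕ) = d - c := rfl
  rw [hv]
  omega

lemma natDegree_prod_X_sub_C (s : Finset (Fin (d + 1))) (η : Fin (d + 1) → K) :
    (∏ l ∈ s, (X - C (η l))).natDegree = s.card := by
  rw [Polynomial.natDegree_prod _ _ (fun l _ => Polynomial.X_sub_C_ne_zero (η l))]
  simp

lemma monic_prod_X_sub_C (s : Finset (Fin (d + 1))) (η : Fin (d + 1) → K) :
    (∏ l ∈ s, (X - C (η l))).Monic :=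
  monic_prod_of_monic _ _ fun l _ => monic_X_sub_C (η l)


end Aux2

/-- A Leonard system `(A; θ_0,…,θ_d; A*; θ*_0,…,θ*_d)` on `V`. -/
def IsLeonardSystem {K V : Type*} [Field K] [AddCommGroup V] [Module K V]
    {d : ℕ} (A Astar : Module.End K V) (θ θs : Fin (d + 1) → K) : Prop :=
  Function.Injective θ ∧ Function.Injective θs ∧
  minpoly K A = ∏ i, (X - C (θ i)) ∧
  minpoly K Astar = ∏ i, (X - C (θs i)) ∧
  (∀ i j : Fin (d + 1),
    ((1 : ℤ) < |((i : ℕ) : ℤ) - ((j : ℕ) : ℤ)| →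
      primIdem A θ i * Astar * primIdem A θ j = 0) ∧
    (|((i : ℕ) : ℤ) - ((j : ℕ) : ℤ)| = 1 →
      primIdem A θ i * Astar * primIdem A θ j ≠ 0)) ∧
  (∀ i j : Fin (d + 1),
    ((1 : ℤ) < |((i : ℕ) : ℤ) - ((j : ℕ) : ℤ)| →
      primIdem Astar θs i * A * primIdem Astar θs j = 0) ∧
    (|((i : ℕ) : ℤ) - ((j : ℕ) : ℤ)| = 1 →
      primIdem Astar θs i * A * primIdem Astar θs j ≠ 0))

/-- The four flags `[0], [d], [0*], [d*]` attached to a Leonard system are mutually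
opposite: any two distinct ones among them satisfy `F_i ∩ G_j = 0` whenever `i + j < d`. -/
theorem stmt_8 {K V : Type*} [Field K] [AddCommGroup V] [Module K V] [FiniteDimensional K V]
    {d : ℕ} (hdim : Module.finrank K V = d + 1)
    (A Astar : Module.End K V) (θ θs : Fin (d + 1) → K)
    (hLS : IsLeonardSystem A Astar θ θs)
    (F0 Fd F0s Fds : Fin (d + 1) → Submodule K V)
    (hF0 : ∀ i : Fin (d + 1), F0 i =
      ⨆ k : Fin (d + 1), ⨆ _ : (k : ℕ) ≤ (i : ℕ), LinearMap.range (primIdem A θ k))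
    (hFd : ∀ i : Fin (d + 1), Fd i =
      ⨆ k : Fin (d + 1), ⨆ _ : d - (i : ℕ) ≤ (k : ℕ), LinearMap.range (primIdem A θ k))
    (hF0s : ∀ i : Fin (d + 1), F0s i =
      ⨆ k : Fin (d + 1), ⨆ _ : (k : ℕ) ≤ (i : ℕ), LinearMap.range (primIdem Astar θs k))
    (hFds : ∀ i : Fin (d + 1), Fds i =
      ⨆ k : Fin (d + 1), ⨆ _ : d - (i : ℕ) ≤ (k : ℕ), LinearMap.range (primIdem Astar θs k)) :
    ∀ i j : Fin (d + 1), (i : ℕ) + (j : ℕ) < d →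
      F0 i ⊓ Fd j = ⊥ ∧ F0 i ⊓ F0s j = ⊥ ∧ F0 i ⊓ Fds j = ⊥ ∧
      Fd i ⊓ F0s j = ⊥ ∧ Fd i ⊓ Fds j = ⊥ ∧ F0s i ⊓ Fds j = ⊥ := by
  obtain ⟨hθ, hθs, hmin, hmins, htriA, htriB⟩ := hLS
  have hsumA : ∑ i, primIdem A θ i = 1 := primIdem_sum hθ
  have horthA : ∀ i j : Fin (d + 1), i ≠ j → primIdem A θ i * primIdem A θ j = 0 :=
    fun i j h => primIdem_orth hθ hmin h
  have hidemA : ∀ i, primIdem A θ i * primIdem A θ i = primIdem A θ i :=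
    primIdem_idem hθ hmin
  have hrankA : ∀ i, Module.finrank K (LinearMap.range (primIdem A θ i)) ≤ 1 :=
    rank_le_one_of_orth hdim _ hsumA horthA hidemA (primIdem_ne_zero hθ hmin)
  have hsumB : ∑ i, primIdem Astar θs i = 1 := primIdem_sum hθs
  have horthB : ∀ i j : Fin (d + 1), i ≠ j →
      primIdem Astar θs i * primIdem Astar θs j = 0 :=
    fun i j h => primIdem_orth hθs hmins h
  have hidemB : ∀ i, primIdem Astar θs i * primIdem Astar θs i = primIdem Astar θs i :=
    primIdem_idem hθs hmins
  have hrankB : ∀ i, Module.finrank K (LinearMap.range (primIdem Astar θs i)) ≤ 1 :=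
    rank_le_one_of_orth hdim _ hsumB horthB hidemB (primIdem_ne_zero hθs hmins)
  intro i j hij
  have hi := i.isLt
  have hj := j.isLt
  refine ⟨?_, ?_, ?_, ?_, ?_, ?_⟩
  -- Goal 1 : F0 i ⊓ Fd j = ⊥
  · rw [Submodule.eq_bot_iff]
    intro x hx
    rw [Submodule.mem_inf] at hx
    obtain ⟨hx1, hx2⟩ := hx
    rw [hF0 i] at hx1
    rw [hFd j] at hx2
    refine eq_zero_of_primIdem (B := A) hθ fun r => ?_
    by_cases hr : (r : ℕ) ≤ (i : ℕ)
    · refine flag_window hθ hmin (fun k hk => ?_) hx2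
      intro heq
      rw [heq] at hk
      omega
    · refine flag_window hθ hmin (fun k hk => ?_) hx1
      intro heq
      rw [heq] at hk
      omega
  -- Goal 2 : F0 i ⊓ F0s j = ⊥
  · rw [Submodule.eq_bot_iff]
    intro x hx
    rw [Submodule.mem_inf] at hx
    obtain ⟨hx1, hx2⟩ := hx
    rw [hF0 i] at hx1
    rw [hF0s j] at hx2
    refine key_fin (primIdem A θ) Astar hsumA horthA hidemA hrankA htriA
      (fun z => z) Function.bijective_id (fun a b => Or.inl rfl)
      ((j : ℕ) + 1) x (i : ℕ) (by omega) (fun k h hk => ?_)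
      (∏ l ∈ (Finset.univ.filter fun l : Fin (d + 1) => (l : ℕ) ≤ (j : ℕ)),
        (X - C (θs l))) (_root_.monic_prod_X_sub_C _ _) ?_ ?_
    · refine flag_window hθ hmin (fun l hl => ?_) hx1
      intro heq
      rw [heq] at hl
      have hl' : k ≤ (i : ℕ) := hl
      omega
    · rw [natDegree_prod_X_sub_C, card_filter_le_val d (j : ℕ) (by omega)]
    · exact flag_kill hθs hmins
        (fun l hl => Finset.mem_filter.mpr ⟨Finset.mem_univ l, hl⟩) hx2
  -- Goal 3 : F0 i ⊓ Fds j = ⊥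
  · rw [Submodule.eq_bot_iff]
    intro x hx
    rw [Submodule.mem_inf] at hx
    obtain ⟨hx1, hx2⟩ := hx
    rw [hF0 i] at hx1
    rw [hFds j] at hx2
    refine key_fin (primIdem A θ) Astar hsumA horthA hidemA hrankA htriA
      (fun z => z) Function.bijective_id (fun a b => Or.inl rfl)
      ((j : ℕ) + 1) x (i : ℕ) (by omega) (fun k h hk => ?_)
      (∏ l ∈ (Finset.univ.filter fun l : Fin (d + 1) => d - (j : ℕ) ≤ (l : ℕ)),
        (X - C (θs l))) (_root_.monic_prod_X_sub_C _ _) ?_ ?_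
    · refine flag_window hθ hmin (fun l hl => ?_) hx1
      intro heq
      rw [heq] at hl
      have hl' : k ≤ (i : ℕ) := hl
      omega
    · rw [natDegree_prod_X_sub_C, card_filter_ge_val d (j : ℕ) (by omega)]
    · exact flag_kill hθs hmins
        (fun l hl => Finset.mem_filter.mpr ⟨Finset.mem_univ l, hl⟩) hx2
  -- Goal 4 : Fd i ⊓ F0s j = ⊥
  · rw [Submodule.eq_bot_iff]
    intro x hx
    rw [Submodule.mem_inf] at hx
    obtain ⟨hx1, hx2⟩ := hx
    rw [hFd i] at hx1
    rw [hF0s j] at hx2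
    refine key_fin (primIdem Astar θs) A hsumB horthB hidemB hrankB htriB
      (fun z => z) Function.bijective_id (fun a b => Or.inl rfl)
      ((i : ℕ) + 1) x (j : ℕ) (by omega) (fun k h hk => ?_)
      (∏ l ∈ (Finset.univ.filter fun l : Fin (d + 1) => d - (i : ℕ) ≤ (l : ℕ)),
        (X - C (θ l))) (_root_.monic_prod_X_sub_C _ _) ?_ ?_
    · refine flag_window hθs hmins (fun l hl => ?_) hx2
      intro heq
      rw [heq] at hl
      have hl' : k ≤ (j : ℕ) := hl
      omega
    · rw [natDegree_prod_X_sub_C, card_filter_ge_val d (i : ℕ) (by omega)]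
    · exact flag_kill hθ hmin
        (fun l hl => Finset.mem_filter.mpr ⟨Finset.mem_univ l, hl⟩) hx1
  -- Goal 5 : Fd i ⊓ Fds j = ⊥
  · rw [Submodule.eq_bot_iff]
    intro x hx
    rw [Submodule.mem_inf] at hx
    obtain ⟨hx1, hx2⟩ := hx
    rw [hFd i] at hx1
    rw [hFds j] at hx2
    have hinv : Function.Involutive
        (fun z : Fin (d + 1) => (⟨d - (z : ℕ), by omega⟩ : Fin (d + 1))) := by
      intro z
      have hz := z.isLt
      apply Fin.ext
      show d - (d - (z : ℕ)) = (z : ℕ)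
      omega
    refine key_fin (primIdem Astar θs) A hsumB horthB hidemB hrankB htriB
      (fun z : Fin (d + 1) => (⟨d - (z : ℕ), by omega⟩ : Fin (d + 1))) hinv.bijective
      (fun a b => Or.inr (by
        have ha := a.isLt
        have hb := b.isLt
        show ((d - (a : ℕ) : ℕ) : ℤ) - ((d - (b : ℕ) : ℕ) : ℤ)
          = -(((a : ℕ) : ℤ) - ((b : ℕ) : ℤ))
        omega))
      ((i : ℕ) + 1) x (j : ℕ) (by omega) (fun k h hk => ?_)
      (∏ l ∈ (Finset.univ.filter fun l : Fin (d + 1) => d - (i : ℕ) ≤ (l : ℕ)),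
        (X - C (θ l))) (_root_.monic_prod_X_sub_C _ _) ?_ ?_
    · refine flag_window hθs hmins (fun l hl => ?_) hx2
      intro heq
      rw [heq] at hl
      have hl' : d - (j : ℕ) ≤ d - k := hl
      omega
    · rw [natDegree_prod_X_sub_C, card_filter_ge_val d (i : ℕ) (by omega)]
    · exact flag_kill hθ hmin
        (fun l hl => Finset.mem_filter.mpr ⟨Finset.mem_univ l, hl⟩) hx1
  -- Goal 6 : F0s i ⊓ Fds j = ⊥
  · rw [Submodule.eq_bot_iff]
    intro x hx
    rw [Submodule.mem_inf] at hx
    obtain ⟨hx1, hx2⟩ := hx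
    rw [hF0s i] at hx1
    rw [hFds j] at hx2
    refine eq_zero_of_primIdem (B := Astar) hθs fun r => ?_
    by_cases hr : (r : ℕ) ≤ (i : ℕ)
    · refine flag_window hθs hmins (fun k hk => ?_) hx2
      intro heq
      rw [heq] at hk
      omega
    · refine flag_window hθs hmins (fun k hk => ?_) hx1
      intro heq
      rw [heq] at hk
      omega
end

section
/- Let d ≥ 0 and let σ_0, σ_1, …, σ_d be scalars in a field K that are β-recurrent for some β ∈ K. Let q be a nonzero element of the algebraic closure of K with q + q^{−1} = β, and suppose q ≠ 1 and q ≠ −1. Then for all 0 ≤ i, j, r, s ≤ d with i + j = r + s one has (q^r − q^s)(σ_i − σ_j) = (q^i − q^j)(σ_r − σ_s). -/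
/-- Let `σ_0, …, σ_d` be a `β`-recurrent sequence in a field `K`, and let `q` be a nonzero
element of the algebraic closure of `K` with `q + q⁻¹ = β`, `q ≠ 1`, `q ≠ −1`.  Then for all
`0 ≤ i, j, r, s ≤ d` with `i + j = r + s`:
`(q^r − q^s)(σ_i − σ_j) = (q^i − q^j)(σ_r − σ_s)`. -/
theorem stmt_13 {K : Type*} [Field K] {d : ℕ} (σ : ℕ → K) (β : K)
    (hrec : ∀ i j : ℕ, 1 ≤ i → i + 1 ≤ d → 1 ≤ j → j + 1 ≤ d →
      σ (i - 1) - β * σ i + σ (i + 1) = σ (j - 1) - β * σ j + σ (j + 1))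
    (q : AlgebraicClosure K) (hq0 : q ≠ 0)
    (hqβ : q + q⁻¹ = algebraMap K (AlgebraicClosure K) β)
    (hq1 : q ≠ 1) (hqm1 : q ≠ -1) :
    ∀ i j r s : ℕ, i ≤ d → j ≤ d → r ≤ d → s ≤ d → i + j = r + s →
      (q ^ r - q ^ s) * (algebraMap K (AlgebraicClosure K) (σ i) -
          algebraMap K (AlgebraicClosure K) (σ j)) =
        (q ^ i - q ^ j) * (algebraMap K (AlgebraicClosure K) (σ r) -
          algebraMap K (AlgebraicClosure K) (σ s)) := by
  set φ : K →+* AlgebraicClosure K := (algebraMap K (AlgebraicClosure K) : K →+* _) with hφ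
  set τ : ℕ → AlgebraicClosure K := fun n => φ (σ n) with hτ
  have hβ' : q + q⁻¹ = φ β := hqβ
  have hqinv : q * q⁻¹ = 1 := mul_inv_cancel₀ hq0
  have hqsq : q * q ≠ 1 := by
    intro h
    rcases mul_self_eq_one_iff.mp h with h | h
    · exact hq1 h
    · exact hqm1 h
  have hq2 : q - q⁻¹ ≠ 0 := by
    intro h
    apply hqsq
    have := sub_eq_zero.mp h
    calc q * q = q * q⁻¹ := by rw [← this]
    _ = 1 := hqinv
  have hβ2 : 2 - φ β ≠ 0 := by
    rw [← hβ']
    intro h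
    apply hq1
    have h2 : (2 - (q + q⁻¹)) * q = 0 := by rw [h]; ring
    have h3 : -(q - 1) ^ 2 = 0 := by
      calc -(q - 1) ^ 2 = (2 - (q + q⁻¹)) * q + (q * q⁻¹ - 1) := by ring
      _ = 0 := by rw [h2, hqinv]; ring
    have := pow_eq_zero_iff (n := 2) (by norm_num) |>.mp (neg_eq_zero.mp h3)
    exact sub_eq_zero.mp this
  -- constants
  set κ : AlgebraicClosure K := φ (σ 0 - β * σ 1 + σ 2) / (2 - φ β) with hκ
  have hκeq : (2 - φ β) * κ = φ (σ 0 - β * σ 1 + σ 2) := by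
    rw [hκ]; field_simp
  set a : AlgebraicClosure K := ((τ 1 - κ) - (τ 0 - κ) * q⁻¹) / (q - q⁻¹) with ha
  set b : AlgebraicClosure K := (τ 0 - κ) - a with hb
  have haeq : a * (q - q⁻¹) = (τ 1 - κ) - (τ 0 - κ) * q⁻¹ := by
    rw [ha, div_mul_cancel₀ _ hq2]
  -- the closed form
  have hform : ∀ i, i ≤ d → τ i = a * q ^ i + b * (q⁻¹) ^ i + κ := by
    intro i
    induction i using Nat.twoStepInduction with
    | zero =>
      intro _
      simp only [pow_zero, mul_one, hb]; ring
    | one =>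
      intro _
      have : a * q + b * q⁻¹ + κ = a * (q - q⁻¹) + (τ 0 - κ) * q⁻¹ + κ := by
        rw [hb]; ring
      rw [pow_one, pow_one, this, haeq]; ring
    | more n ih1 ih2 =>
      intro hn2
      have h1 : 1 ≤ n + 1 := by omega
      have h2 : n + 1 + 1 ≤ d := by omega
      have hd2 : 2 ≤ d := by omega
      have hr := hrec (n + 1) 1 h1 h2 (by omega) hd2
      simp only [Nat.add_sub_cancel] at hr
      have hr' : τ n - φ β * τ (n + 1) + τ (n + 2) = φ (σ 0 - β * σ 1 + σ 2) := by
        have := congrArg φ hr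
        simpa [hτ, map_sub, map_add, map_mul] using this
      have e1 : τ n = a * q ^ n + b * q⁻¹ ^ n + κ := ih1 (by omega)
      have e2 : τ (n + 1) = a * q ^ (n + 1) + b * q⁻¹ ^ (n + 1) + κ := ih2 (by omega)
      have : τ (n + 2) = φ β * τ (n + 1) - τ n + (2 - φ β) * κ := by
        linear_combination hr' - hκeq
      rw [this, e1, e2, ← hβ']
      linear_combination (a * q ^ n + b * q⁻¹ ^ n) * hqinv
  intro i j r s hi hj hr hs hsum
  have hpow : q ^ i * q ^ j = q ^ r * q ^ s := by
    rw [← pow_add, ← pow_add, hsum]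
  have h1 : ∀ n : ℕ, q ^ n * q⁻¹ ^ n = 1 := fun n => by
    rw [← mul_pow, hqinv, one_pow]
  have key : (q ^ r - q ^ s) * ((q⁻¹) ^ i - (q⁻¹) ^ j) =
      (q ^ i - q ^ j) * ((q⁻¹) ^ r - (q⁻¹) ^ s) := by
    have hc : q ^ (i + j) ≠ 0 := pow_ne_zero _ hq0
    apply mul_left_cancel₀ hc
    rw [pow_add]
    linear_combination (q ^ r - q ^ s) * q ^ j * (h1 i) -
      (q ^ r - q ^ s) * q ^ i * (h1 j) -
      ((q⁻¹) ^ r - (q⁻¹) ^ s) * (q ^ i - q ^ j) * hpow -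
      (q ^ i - q ^ j) * q ^ s * (h1 r) + (q ^ i - q ^ j) * q ^ r * (h1 s)
  show (q ^ r - q ^ s) * (τ i - τ j) = (q ^ i - q ^ j) * (τ r - τ s)
  linear_combination (q ^ r - q ^ s) * (hform i hi) - (q ^ r - q ^ s) * (hform j hj) -
    (q ^ i - q ^ j) * (hform r hr) + (q ^ i - q ^ j) * (hform s hs) + b * key
end

section
/- Let d ≥ 3 and let σ_0, σ_1, …, σ_d be mutually distinct scalars in a field K such that the ratio (σ_{i−2} − σ_{i+1})/(σ_{i−1} − σ_i) is independent of i for 2 ≤ i ≤ d−1. Let q be a nonzero element of the algebraic closure of K such that q + q^{−1} + 1 equals this common ratio, and suppose q ≠ 1 and q ≠ −1. Then q^i ≠ 1 for 1 ≤ i ≤ d. -/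
/-- Let `d ≥ 3` and let `σ_0, …, σ_d` be mutually distinct scalars in a field `K` such that
`(σ_{i−2} − σ_{i+1})/(σ_{i−1} − σ_i)` equals a common value `ρ` for `2 ≤ i ≤ d−1`.  If `q`
is a nonzero element of the algebraic closure of `K` with `q + q⁻¹ + 1 = ρ`, `q ≠ 1` and
`q ≠ −1`, then `qⁱ ≠ 1` for `1 ≤ i ≤ d`. -/
theorem stmt_14 {K : Type*} [Field K] {d : ℕ} (hd : 3 ≤ d) (σ : ℕ → K)
    (hdist : ∀ i j : ℕ, i ≤ d → j ≤ d → σ i = σ j → i = j)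
    (ρ : K)
    (hratio : ∀ i : ℕ, 2 ≤ i → i + 1 ≤ d →
      σ (i - 2) - σ (i + 1) = ρ * (σ (i - 1) - σ i))
    (q : AlgebraicClosure K) (hq0 : q ≠ 0)
    (hqρ : q + q⁻¹ + 1 = algebraMap K (AlgebraicClosure K) ρ)
    (hq1 : q ≠ 1) (hqm1 : q ≠ -1) :
    ∀ i : ℕ, 1 ≤ i → i ≤ d → q ^ i ≠ 1 := by
  obtain ⟨s, hs⟩ : ∃ s : ℕ → AlgebraicClosure K,
      s = fun i => algebraMap K (AlgebraicClosure K) (σ i) := ⟨_, rfl⟩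
  obtain ⟨v, hvdef⟩ : ∃ v : AlgebraicClosure K, v = q⁻¹ := ⟨_, rfl⟩
  have hqv : q * v = 1 := by rw [hvdef]; exact mul_inv_cancel₀ hq0
  have hq1' : q - 1 ≠ 0 := sub_ne_zero.mpr hq1
  have hqp1 : q + 1 ≠ 0 := by intro h; apply hqm1; linear_combination h
  have hv1 : v - 1 ≠ 0 := by
    intro h
    have hv' : v = 1 := by linear_combination h
    rw [hv'] at hqv
    exact hq1 (by linear_combination hqv)
  have hqv' : q - v ≠ 0 := by
    intro h
    have hv' : v = q := by linear_combination -h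
    rw [hv'] at hqv
    have : (q - 1) * (q + 1) = 0 := by linear_combination hqv
    rcases mul_eq_zero.mp this with h' | h'
    · exact hq1' h'
    · exact hqp1 h'
  have hvq' : v - q ≠ 0 := by intro h; apply hqv'; linear_combination -h
  obtain ⟨b, hb⟩ : ∃ b : AlgebraicClosure K,
      b = ((s 2 - s 1) - v * (s 1 - s 0)) / ((q - 1) * (q - v)) := ⟨_, rfl⟩
  obtain ⟨c, hc⟩ : ∃ c : AlgebraicClosure K,
      c = ((s 2 - s 1) - q * (s 1 - s 0)) / ((v - 1) * (v - q)) := ⟨_, rfl⟩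
  obtain ⟨a, ha⟩ : ∃ a : AlgebraicClosure K, a = s 0 - b - c := ⟨_, rfl⟩
  have hρ' : algebraMap K (AlgebraicClosure K) ρ = q + v + 1 := by
    rw [← hqρ, hvdef]
  have hD1 : (q - 1) * (q - v) ≠ 0 := mul_ne_zero hq1' hqv'
  have hD2 : (v - 1) * (v - q) ≠ 0 := mul_ne_zero hv1 hvq'
  have hB : b * ((q - 1) * (q - v)) = (s 2 - s 1) - v * (s 1 - s 0) := by
    rw [hb, div_mul_cancel₀ _ hD1]
  have hC : c * ((v - 1) * (v - q)) = (s 2 - s 1) - q * (s 1 - s 0) := by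
    rw [hc, div_mul_cancel₀ _ hD2]
  have e1 : b * (q - 1) + c * (v - 1) = s 1 - s 0 := by
    have h : (b * (q - 1) + c * (v - 1) - (s 1 - s 0)) * (q - v) = 0 := by
      linear_combination hB - hC
    rcases mul_eq_zero.mp h with h' | h'
    · linear_combination h'
    · exact absurd h' hqv'
  have e2 : b * (q ^ 2 - 1) + c * (v ^ 2 - 1) = s 2 - s 0 := by
    have h : (b * (q ^ 2 - 1) + c * (v ^ 2 - 1) - (s 2 - s 0)) * (q - v) = 0 := by
      linear_combination (q + 1) * hB - (v + 1) * hC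
    rcases mul_eq_zero.mp h with h' | h'
    · linear_combination h'
    · exact absurd h' hqv'
  have key : ∀ i, i ≤ d → s i = a + b * q ^ i + c * v ^ i := by
    intro i
    induction i using Nat.strong_induction_on with
    | _ i ih =>
      intro hi
      match i with
      | 0 => rw [ha]; ring
      | 1 =>
        rw [ha]
        linear_combination -e1
      | 2 =>
        rw [ha]
        linear_combination -e2
      | (n+3) =>
        have h0 := ih n (by omega) (by omega)
        have h1 := ih (n+1) (by omega) (by omega)
        have h2 := ih (n+2) (by omega) (by omega)
        have hr := hratio (n+2) (by omega) (by omega)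
        have hr' : s ((n+2) - 2) - s ((n+2)+1)
            = algebraMap K (AlgebraicClosure K) ρ * (s ((n+2)-1) - s (n+2)) := by
          rw [hs]
          simp only [← map_mul, ← map_sub, hr]
        simp only [Nat.add_sub_cancel, show (n+2) - 2 = n from by omega,
          show (n+2) - 1 = n + 1 from by omega, hρ'] at hr'
        have hstep : s (n+3) = s n - (q + v + 1) * (s (n+1) - s (n+2)) := by
          linear_combination -hr'
        rw [hstep, h0, h1, h2]
        linear_combination (b * q ^ n * (q - 1) + c * v ^ n * (v - 1)) * hqv
  intro i h1 hid hcon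
  have hvi : v ^ i = 1 := by
    rw [hvdef, inv_pow, hcon, inv_one]
  have hsi : s i = s 0 := by
    rw [key i hid, key 0 (by omega), hcon, hvi]
    simp
  rw [hs] at hsi
  have hσ : σ i = σ 0 := (algebraMap K (AlgebraicClosure K)).injective hsi
  have := hdist i 0 hid (by omega) hσ
  omega
end

section
/- Let F be a field, let q be a nonzero element of F, and let r, s, t be positive integers such that q^h ≠ 1 for 1 ≤ h ≤ r+s+t−1. For nonnegative integers a, b, c with a+b+c ≤ r+s+t−1, define T(a,b,c) = (q;q)_{a+b}(q;q)_{a+c}(q;q)_{b+c} / ((q;q)_a (q;q)_b (q;q)_c (q;q)_{a+b+c}), where (x;q)_n = (1−x)(1−xq)⋯(1−xq^{n−1}). Then (q^t − q^r)·T(r, s−1, t) = (1 − q^{r+t})·(T(r−1, s, t) − T(r, s, t−1)). -/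
open Finset

/-- The `q`-Pochhammer symbol `(q;q)_n = (1−q)(1−q²)⋯(1−qⁿ)`. -/
noncomputable def qPoch {F : Type*} [Field F] (q : F) (n : ℕ) : F :=
  ∏ m ∈ Finset.range n, (1 - q ^ (m + 1))

/-- `T(a,b,c) = (q;q)_{a+b}(q;q)_{a+c}(q;q)_{b+c} / ((q;q)_a (q;q)_b (q;q)_c (q;q)_{a+b+c})`. -/
noncomputable def qT {F : Type*} [Field F] (q : F) (a b c : ℕ) : F :=
  qPoch q (a + b) * qPoch q (a + c) * qPoch q (b + c) /
    (qPoch q a * qPoch q b * qPoch q c * qPoch q (a + b + c))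

lemma qPoch_succ {F : Type*} [Field F] (q : F) (n : ℕ) :
    qPoch q (n + 1) = qPoch q n * (1 - q ^ (n + 1)) := by
  rw [qPoch, Finset.prod_range_succ]; rfl

/-- For positive integers `r, s, t` with `q^h ≠ 1` for `1 ≤ h ≤ r+s+t−1`:
`(q^t − q^r)·T(r, s−1, t) = (1 − q^{r+t})·(T(r−1, s, t) − T(r, s, t−1))`. -/
theorem stmt_15 {F : Type*} [Field F] (q : F) (hq0 : q ≠ 0) (r s t : ℕ)
    (hr : 1 ≤ r) (hs : 1 ≤ s) (ht : 1 ≤ t)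
    (hq : ∀ h : ℕ, 1 ≤ h → h ≤ r + s + t - 1 → q ^ h ≠ 1) :
    (q ^ t - q ^ r) * qT q r (s - 1) t =
      (1 - q ^ (r + t)) * (qT q (r - 1) s t - qT q r s (t - 1)) := by
  obtain ⟨R, rfl⟩ : ∃ R, r = R + 1 := ⟨r - 1, by omega⟩
  obtain ⟨S, rfl⟩ : ∃ S, s = S + 1 := ⟨s - 1, by omega⟩
  obtain ⟨T, rfl⟩ : ∃ T, t = T + 1 := ⟨t - 1, by omega⟩
  have hP : ∀ n, n ≤ R + S + T + 2 → qPoch q n ≠ 0 := by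
    intro n hn
    refine Finset.prod_ne_zero_iff.mpr ?_
    intro m hm
    simp only [Finset.mem_range] at hm
    exact sub_ne_zero.mpr (Ne.symm (hq (m + 1) (by omega) (by omega)))
  have h1 := hP R (by omega)
  have h2 := hP S (by omega)
  have h3 := hP T (by omega)
  have h4 := hP (R + S + 1) (by omega)
  have h5 := hP (R + T + 1) (by omega)
  have h6 := hP (S + T + 1) (by omega)
  have h7 := hP (R + S + T + 2) (by omega)
  have hR1 : (1 : F) - q ^ (R + 1) ≠ 0 :=
    sub_ne_zero.mpr (Ne.symm (hq (R + 1) (by omega) (by omega)))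
  have hS1 : (1 : F) - q ^ (S + 1) ≠ 0 :=
    sub_ne_zero.mpr (Ne.symm (hq (S + 1) (by omega) (by omega)))
  have hT1 : (1 : F) - q ^ (T + 1) ≠ 0 :=
    sub_ne_zero.mpr (Ne.symm (hq (T + 1) (by omega) (by omega)))
  set K : F := qPoch q (R + S + 1) * qPoch q (R + T + 1) * qPoch q (S + T + 1) /
      (qPoch q R * qPoch q S * qPoch q T * qPoch q (R + S + T + 2)) with hK
  have e1 : qT q (R + 1) (S + 1 - 1) (T + 1) =
      K * ((1 - q ^ (R + T + 2)) / ((1 - q ^ (R + 1)) * (1 - q ^ (T + 1)))) := by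
    simp only [Nat.add_sub_cancel, qT,
      show R + 1 + S = R + S + 1 from by omega,
      show R + 1 + (T + 1) = (R + T + 1) + 1 from by omega,
      show S + (T + 1) = S + T + 1 from by omega,
      show R + 1 + S + (T + 1) = R + S + T + 2 from by omega]
    rw [qPoch_succ q (R + T + 1), qPoch_succ q R, qPoch_succ q T, hK]
    rw [show R + S + 1 + (T + 1) = R + S + T + 2 from by omega]
    field_simp
  have e2 : qT q (R + 1 - 1) (S + 1) (T + 1) =
      K * ((1 - q ^ (S + T + 2)) / ((1 - q ^ (S + 1)) * (1 - q ^ (T + 1)))) := by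
    simp only [Nat.add_sub_cancel, qT,
      show R + (S + 1) = R + S + 1 from by omega,
      show R + (T + 1) = R + T + 1 from by omega,
      show S + 1 + (T + 1) = (S + T + 1) + 1 from by omega,
      show R + (S + 1) + (T + 1) = R + S + T + 2 from by omega]
    rw [qPoch_succ q (S + T + 1), qPoch_succ q S, qPoch_succ q T, hK]
    rw [show R + S + 1 + (T + 1) = R + S + T + 2 from by omega]
    field_simp
  have e3 : qT q (R + 1) (S + 1) (T + 1 - 1) =
      K * ((1 - q ^ (R + S + 2)) / ((1 - q ^ (R + 1)) * (1 - q ^ (S + 1)))) := by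
    simp only [Nat.add_sub_cancel, qT,
      show R + 1 + (S + 1) = (R + S + 1) + 1 from by omega,
      show R + 1 + T = R + T + 1 from by omega,
      show S + 1 + T = S + T + 1 from by omega,
      show R + 1 + (S + 1) + T = R + S + T + 2 from by omega]
    rw [qPoch_succ q (R + S + 1), qPoch_succ q R, qPoch_succ q S, hK]
    rw [show R + S + 1 + 1 + T = R + S + T + 2 from by omega]
    field_simp
  rw [e1, e2, e3]
  have hRT : R + 1 + (T + 1) = R + T + 2 := by omega
  rw [hRT]
  clear_value K
  field_simp
  ring
end

section
/- Let (A; θ_0,…,θ_d; A*; θ*_0,…,θ*_d) be a Leonard system on V. Define Ẽ_0 = (A−θ_1 I)⋯(A−θ_d I), Ẽ_d = (A−θ_0 I)⋯(A−θ_{d−1} I), Ẽ*_0 = (A*−θ*_1 I)⋯(A*−θ*_d I), and Ẽ*_d = (A*−θ*_0 I)⋯(A*−θ*_{d−1} I). Then: Ẽ*_d Ẽ_0 Ẽ*_0 = Ẽ*_d Ẽ_d Ẽ*_0, Ẽ_d Ẽ*_0 Ẽ_0 = Ẽ_d Ẽ*_d Ẽ_0, Ẽ_0 Ẽ*_0 Ẽ_d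 = Ẽ_0 Ẽ*_d Ẽ_d, and Ẽ*_0 Ẽ_0 Ẽ*_d = Ẽ*_0 Ẽ_d Ẽ*_d. -/
open Polynomial Finset

section Helpers

variable {K V : Type*} [Field K] [AddCommGroup V] [Module K V] {d : ℕ}

private lemma primIdem_mul_eq_zero {B : Module.End K V} {μ : Fin (d + 1) → K}
    (hmin : minpoly K B = ∏ k, (X - C (μ k))) {i j : Fin (d + 1)} (hij : i ≠ j) :
    primIdem B μ i * primIdem B μ j = 0 := by
  have h1 : (∏ k, (X - C (μ k))) ∣
      (∏ k ∈ Finset.univ.erase i, (X - C (μ k))) *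
      (∏ k ∈ Finset.univ.erase j, (X - C (μ k))) := by
    rw [← Finset.mul_prod_erase _ _ (Finset.mem_univ i), mul_comm
      (∏ k ∈ Finset.univ.erase i, (X - C (μ k)))]
    exact mul_dvd_mul (Finset.dvd_prod_of_mem _ (Finset.mem_erase.2 ⟨hij, Finset.mem_univ i⟩))
      dvd_rfl
  have h2 : minpoly K B ∣
      (∏ k ∈ Finset.univ.erase i, (C ((μ i - μ k)⁻¹) * (X - C (μ k)))) *
      (∏ k ∈ Finset.univ.erase j, (C ((μ j - μ k)⁻¹) * (X - C (μ k)))) := by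
    rw [hmin, Finset.prod_mul_distrib, Finset.prod_mul_distrib]
    have : (∏ k ∈ Finset.univ.erase i, C ((μ i - μ k)⁻¹)) *
        (∏ k ∈ Finset.univ.erase i, (X - C (μ k))) *
        ((∏ k ∈ Finset.univ.erase j, C ((μ j - μ k)⁻¹)) *
        (∏ k ∈ Finset.univ.erase j, (X - C (μ k)))) =
        ((∏ k ∈ Finset.univ.erase i, C ((μ i - μ k)⁻¹)) *
        (∏ k ∈ Finset.univ.erase j, C ((μ j - μ k)⁻¹))) *
        ((∏ k ∈ Finset.univ.erase i, (X - C (μ k))) *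
        (∏ k ∈ Finset.univ.erase j, (X - C (μ k)))) := by ring
    rw [this]
    exact h1.mul_left _
  obtain ⟨q, hq⟩ := h2
  rw [primIdem, primIdem, ← map_mul, hq, map_mul, minpoly.aeval, zero_mul]

private lemma primIdem_sum_s17 {B : Module.End K V} {μ : Fin (d + 1) → K}
    (hinj : Function.Injective μ) : ∑ i, primIdem B μ i = 1 := by
  have h := Lagrange.sum_basis (s := Finset.univ) (v := μ) hinj.injOn Finset.univ_nonempty
  have : (1 : Module.End K V) = aeval B (∑ i, Lagrange.basis Finset.univ μ i) := by
    rw [h, map_one]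
  rw [this, map_sum]
  rfl

private lemma tridiag_pow {B M : Module.End K V} {μ : Fin (d + 1) → K}
    (hinj : Function.Injective μ) (hmin : minpoly K B = ∏ k, (X - C (μ k)))
    (htri : ∀ i j : Fin (d + 1), (1 : ℤ) < |((i : ℕ) : ℤ) - ((j : ℕ) : ℤ)| →
      primIdem B μ i * M * primIdem B μ j = 0) :
    ∀ k : ℕ, ∀ i j : Fin (d + 1), (k : ℤ) < |((i : ℕ) : ℤ) - ((j : ℕ) : ℤ)| →
      primIdem B μ i * M ^ k * primIdem B μ j = 0 := by
  intro k
  induction k with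
  | zero =>
    intro i j h
    have hij : i ≠ j := by
      intro he; subst he; simp at h
    rw [pow_zero, mul_one]
    exact primIdem_mul_eq_zero hmin hij
  | succ k ih =>
    intro i j h
    have expand : primIdem B μ i * M ^ (k + 1) * primIdem B μ j =
        ∑ m, (primIdem B μ i * M ^ k * primIdem B μ m) * (M * primIdem B μ j) := by
      have h1 : primIdem B μ i * M ^ (k + 1) * primIdem B μ j =
          (primIdem B μ i * M ^ k) * (∑ m, primIdem B μ m) * (M * primIdem B μ j) := by
        rw [primIdem_sum_s17 hinj, mul_one, pow_succ]; simp only [mul_assoc]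
      rw [h1, Finset.mul_sum, Finset.sum_mul]
    rw [expand]
    apply Finset.sum_eq_zero
    intro m _
    by_cases h1 : (1 : ℤ) < |((m : ℕ) : ℤ) - ((j : ℕ) : ℤ)|
    · have := htri m j h1
      calc (primIdem B μ i * M ^ k * primIdem B μ m) * (M * primIdem B μ j)
          = (primIdem B μ i * M ^ k) * (primIdem B μ m * M * primIdem B μ j) := by
            simp only [mul_assoc]
        _ = 0 := by rw [this, mul_zero]
    · have h2 : (k : ℤ) < |((i : ℕ) : ℤ) - ((m : ℕ) : ℤ)| := by
        have htr := abs_sub_le ((i : ℕ) : ℤ) ((m : ℕ) : ℤ) ((j : ℕ) : ℤ)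
        push_cast at h ⊢
        omega
      rw [ih i m h2, zero_mul]

private lemma key_lemma {B M : Module.End K V} {μ : Fin (d + 1) → K}
    (hinj : Function.Injective μ) (hmin : minpoly K B = ∏ k, (X - C (μ k)))
    (htri : ∀ i j : Fin (d + 1), (1 : ℤ) < |((i : ℕ) : ℤ) - ((j : ℕ) : ℤ)| →
      primIdem B μ i * M * primIdem B μ j = 0)
    {i j : Fin (d + 1)} (hij : |((i : ℕ) : ℤ) - ((j : ℕ) : ℤ)| = d)
    {p : K[X]} (hp : p.Monic) (hdeg : p.natDegree = d) :
    primIdem B μ i * aeval M p * primIdem B μ j =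
      primIdem B μ i * M ^ d * primIdem B μ j := by
  set q := p - X ^ d with hqdef
  have hpd : p = X ^ d + q := by rw [hqdef]; ring
  have haq : primIdem B μ i * aeval M q * primIdem B μ j = 0 := by
    by_cases hq0 : q = 0
    · rw [hq0, map_zero, mul_zero, zero_mul]
    · have hqdeg : q.degree < (d : WithBot ℕ) := by
        have := Polynomial.degree_sub_lt (p := p) (q := X ^ d) ?_ hp.ne_zero ?_
        · rwa [Polynomial.degree_eq_natDegree hp.ne_zero, hdeg] at this
        · rw [Polynomial.degree_X_pow, Polynomial.degree_eq_natDegree hp.ne_zero, hdeg]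
        · rw [hp.leadingCoeff, (Polynomial.monic_X_pow d).leadingCoeff]
      have hnd : q.natDegree < d := (Polynomial.natDegree_lt_iff_degree_lt hq0).2 hqdeg
      rw [Polynomial.aeval_eq_sum_range' hnd M]
      rw [Finset.mul_sum, Finset.sum_mul]
      apply Finset.sum_eq_zero
      intro k hk
      have hkd : (k : ℤ) < |((i : ℕ) : ℤ) - ((j : ℕ) : ℤ)| := by
        rw [hij]; exact_mod_cast Finset.mem_range.1 hk
      rw [mul_smul_comm, smul_mul_assoc, tridiag_pow hinj hmin htri k i j hkd, smul_zero]
  calc primIdem B μ i * aeval M p * primIdem B μ j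
      = primIdem B μ i * M ^ d * primIdem B μ j +
        primIdem B μ i * aeval M q * primIdem B μ j := by
        rw [hpd, map_add, Polynomial.aeval_X_pow, mul_add, add_mul]
    _ = primIdem B μ i * M ^ d * primIdem B μ j := by rw [haq, add_zero]

private lemma tilde_eq {B : Module.End K V} {μ : Fin (d + 1) → K}
    (hinj : Function.Injective μ) (i : Fin (d + 1)) :
    aeval B (∏ k ∈ Finset.univ.erase i, (X - C (μ k))) =
      (∏ k ∈ Finset.univ.erase i, (μ i - μ k)) • primIdem B μ i := by
  rw [primIdem, Finset.prod_mul_distrib, ← map_prod, map_mul, aeval_C, ← Algebra.smul_def,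
    smul_smul]
  rw [← Finset.prod_mul_distrib]
  have : (∏ k ∈ Finset.univ.erase i, (μ i - μ k) * (μ i - μ k)⁻¹) = 1 := by
    apply Finset.prod_eq_one
    intro k hk
    have hne : μ i - μ k ≠ 0 := by
      have : i ≠ k := (Finset.mem_erase.1 hk).1.symm
      exact sub_ne_zero.2 fun he => this (hinj he)
    exact mul_inv_cancel₀ hne
  rw [this, one_smul]

private lemma tilde_key {B M : Module.End K V} {μ : Fin (d + 1) → K}
    (hinj : Function.Injective μ) (hmin : minpoly K B = ∏ k, (X - C (μ k)))
    (htri : ∀ i j : Fin (d + 1), (1 : ℤ) < |((i : ℕ) : ℤ) - ((j : ℕ) : ℤ)| →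
      primIdem B μ i * M * primIdem B μ j = 0)
    {i j : Fin (d + 1)} (hij : |((i : ℕ) : ℤ) - ((j : ℕ) : ℤ)| = d)
    {p q : K[X]} (hp : p.Monic) (hdp : p.natDegree = d)
    (hq : q.Monic) (hdq : q.natDegree = d) :
    aeval B (∏ k ∈ Finset.univ.erase i, (X - C (μ k))) * aeval M p *
      aeval B (∏ k ∈ Finset.univ.erase j, (X - C (μ k))) =
    aeval B (∏ k ∈ Finset.univ.erase i, (X - C (μ k))) * aeval M q *
      aeval B (∏ k ∈ Finset.univ.erase j, (X - C (μ k))) := by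
  rw [tilde_eq hinj i, tilde_eq hinj j]
  simp only [smul_mul_assoc, mul_smul_comm]
  rw [key_lemma hinj hmin htri hij hp hdp, key_lemma hinj hmin htri hij hq hdq]

private lemma monic_tilde (μ : Fin (d + 1) → K) (i : Fin (d + 1)) :
    (∏ k ∈ Finset.univ.erase i, (X - C (μ k))).Monic :=
  monic_prod_of_monic _ _ fun k _ => monic_X_sub_C (μ k)

private lemma natDegree_tilde (μ : Fin (d + 1) → K) (i : Fin (d + 1)) :
    (∏ k ∈ Finset.univ.erase i, (X - C (μ k))).natDegree = d := by
  rw [Polynomial.natDegree_prod_of_monic _ _ fun k _ => monic_X_sub_C (μ k)]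
  simp [Polynomial.natDegree_X_sub_C, Finset.card_erase_of_mem]

private lemma abs_last_zero : |((((Fin.last d) : ℕ)) : ℤ) - (((0 : Fin (d + 1)) : ℕ) : ℤ)| = d := by
  simp [Fin.val_last]

private lemma abs_zero_last : |(((0 : Fin (d + 1)) : ℕ) : ℤ) - ((((Fin.last d) : ℕ)) : ℤ)| = d := by
  simp [Fin.val_last]

end Helpers

/-- With `Ẽ_0 = (A−θ_1 I)⋯(A−θ_d I)`, `Ẽ_d = (A−θ_0 I)⋯(A−θ_{d−1} I)`,
`Ẽ*_0 = (A*−θ*_1 I)⋯(A*−θ*_d I)`, `Ẽ*_d = (A*−θ*_0 I)⋯(A*−θ*_{d−1} I)`, one has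
`Ẽ*_d Ẽ_0 Ẽ*_0 = Ẽ*_d Ẽ_d Ẽ*_0`, `Ẽ_d Ẽ*_0 Ẽ_0 = Ẽ_d Ẽ*_d Ẽ_0`,
`Ẽ_0 Ẽ*_0 Ẽ_d = Ẽ_0 Ẽ*_d Ẽ_d`, and `Ẽ*_0 Ẽ_0 Ẽ*_d = Ẽ*_0 Ẽ_d Ẽ*_d`. -/
theorem stmt_17 {K V : Type*} [Field K] [AddCommGroup V] [Module K V] [FiniteDimensional K V]
    {d : ℕ} (hdim : Module.finrank K V = d + 1)
    (A Astar : Module.End K V) (θ θs : Fin (d + 1) → K)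
    (hLS : IsLeonardSystem A Astar θ θs)
    (E0t Edt E0st Edst : Module.End K V)
    (hE0t : E0t = aeval A (∏ k ∈ Finset.univ.erase (0 : Fin (d + 1)), (X - C (θ k))))
    (hEdt : Edt = aeval A (∏ k ∈ Finset.univ.erase (Fin.last d), (X - C (θ k))))
    (hE0st : E0st = aeval Astar (∏ k ∈ Finset.univ.erase (0 : Fin (d + 1)), (X - C (θs k))))
    (hEdst : Edst = aeval Astar (∏ k ∈ Finset.univ.erase (Fin.last d), (X - C (θs k)))) :
    Edst * E0t * E0st = Edst * Edt * E0st ∧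
    Edt * E0st * E0t = Edt * Edst * E0t ∧
    E0t * E0st * Edt = E0t * Edst * Edt ∧
    E0st * E0t * Edst = E0st * Edt * Edst := by
  obtain ⟨hθ, hθs, hminA, hminAs, htriA, htriAs⟩ := hLS
  have htri1 : ∀ i j : Fin (d + 1), (1 : ℤ) < |((i : ℕ) : ℤ) - ((j : ℕ) : ℤ)| →
      primIdem Astar θs i * A * primIdem Astar θs j = 0 := fun i j h => (htriAs i j).1 h
  have htri2 : ∀ i j : Fin (d + 1), (1 : ℤ) < |((i : ℕ) : ℤ) - ((j : ℕ) : ℤ)| →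
      primIdem A θ i * Astar * primIdem A θ j = 0 := fun i j h => (htriA i j).1 h
  subst hE0t hEdt hE0st hEdst
  refine ⟨?_, ?_, ?_, ?_⟩
  · exact tilde_key hθs hminAs htri1 abs_last_zero (monic_tilde θ 0) (natDegree_tilde θ 0)
      (monic_tilde θ (Fin.last d)) (natDegree_tilde θ (Fin.last d))
  · exact tilde_key hθ hminA htri2 abs_last_zero (monic_tilde θs 0) (natDegree_tilde θs 0)
      (monic_tilde θs (Fin.last d)) (natDegree_tilde θs (Fin.last d))
  · exact tilde_key hθ hminA htri2 abs_zero_last (monic_tilde θs 0) (natDegree_tilde θs 0)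
      (monic_tilde θs (Fin.last d)) (natDegree_tilde θs (Fin.last d))
  · exact tilde_key hθs hminAs htri1 abs_zero_last (monic_tilde θ 0) (natDegree_tilde θ 0)
      (monic_tilde θ (Fin.last d)) (natDegree_tilde θ (Fin.last d))
end
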